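/- Let P be a path graph on vertices v_0, ..., v_{m-1} colored with n colors so that every pair of distinct colors appears on some edge of the path. If the endpoints v_0 and v_{m-1} have different colors a and b, then each of the color classes a and b contains at least ⌈n/2⌉ vertices. -/

import Mathlib

/-!
Every color `c ≠ a` must sit next to some vertex of color `a`, so it is the color of a
neighbour of a vertex of the class `A` of `a`. The vertices of `A` have at most `2 * #A`
neighbours, and one fewer if `A` contains an endpoint of the path. Hence
`n - 1 ≤ 2 * #A - 1`, i.e. `#A ≥ ⌈n/2⌉`, for the class of either endpoint.
-/

open Finset

namespace PathColoring

variable {α : Type*} (s : ℕ → α) (m : ℕ)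

/-- The path has vertices `0, …, m - 1`, colored by `s`. -/
def CoversPair (a b : α) : Prop :=
  ∃ i, i + 1 < m ∧ ((s i = a ∧ s (i + 1) = b) ∨ (s i = b ∧ s (i + 1) = a))

variable [DecidableEq α]

def colorClass (a : α) : Finset ℕ :=
  (range m).filter (s · = a)

variable {s m}

theorem mem_colorClass {a : α} {i : ℕ} : i ∈ colorClass s m a ↔ i < m ∧ s i = a := by
  simp [colorClass]

theorem mem_image_neighbors_of_coversPair {a c : α} (h : CoversPair s m a c) :
    c ∈ ((colorClass s m a).erase (m - 1)).image (fun i => s (i + 1)) ∪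
      ((colorClass s m a).erase 0).image (fun i => s (i - 1)) := by
  obtain ⟨i, hi, ⟨hia, hic⟩ | ⟨hic, hia⟩⟩ := h
  · refine mem_union_left _ (mem_image.2 ⟨i, ?_, hic⟩)
    exact mem_erase.2 ⟨by omega, mem_colorClass.2 ⟨by omega, hia⟩⟩
  · refine mem_union_right _ (mem_image.2 ⟨i + 1, ?_, hic⟩)
    exact mem_erase.2 ⟨by omega, mem_colorClass.2 ⟨hi, hia⟩⟩

theorem card_le_two_mul_card_colorClass [Fintype α] {a : α}
    (hcov : ∀ c, c ≠ a → CoversPair s m a c)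
    (hend : 0 ∈ colorClass s m a ∨ m - 1 ∈ colorClass s m a) :
    Fintype.card α ≤ 2 * #(colorClass s m a) := by
  set A := colorClass s m a
  have hsub : univ.erase a ⊆
      (A.erase (m - 1)).image (fun i => s (i + 1)) ∪ (A.erase 0).image (fun i => s (i - 1)) :=
    fun c hc => mem_image_neighbors_of_coversPair (hcov c (ne_of_mem_erase hc))
  have hneighbors : Fintype.card α - 1 ≤ #(A.erase (m - 1)) + #(A.erase 0) := by
    calc Fintype.card α - 1 = #(univ.erase a) := by rw [card_erase_of_mem (mem_univ a), card_univ]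
      _ ≤ _ := (card_le_card hsub).trans (card_union_le _ _)
      _ ≤ _ := add_le_add card_image_le card_image_le
  have hcardα : 0 < Fintype.card α := Fintype.card_pos_iff.2 ⟨a⟩
  have h0 := card_erase_le (s := A) (a := 0)
  have h1 := card_erase_le (s := A) (a := m - 1)
  rcases hend with hA | hA <;>
    have := card_erase_of_mem hA <;> have := card_pos.2 ⟨_, hA⟩ <;> omega

end PathColoring

open PathColoring in
theorem stmt_7_general (n m : ℕ) (hm : 1 ≤ m) (s : ℕ → Fin n)
    (hcov : ∀ a b : Fin n, a ≠ b → ∃ i : ℕ, i + 1 < m ∧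
      ((s i = a ∧ s (i + 1) = b) ∨ (s i = b ∧ s (i + 1) = a))) :
    (n + 1) / 2 ≤ ({i : ℕ | i < m ∧ s i = s 0}).ncard ∧
    (n + 1) / 2 ≤ ({i : ℕ | i < m ∧ s i = s (m - 1)}).ncard := by
  have hclass (a : Fin n) : {i : ℕ | i < m ∧ s i = a} = ↑(colorClass s m a) := by
    ext i; simp [mem_colorClass]
  have hfirst := card_le_two_mul_card_colorClass (a := s 0) (fun c hc => hcov _ _ hc.symm)
    (.inl (mem_colorClass.2 ⟨hm, rfl⟩))
  have hlast := card_le_two_mul_card_colorClass (a := s (m - 1)) (fun c hc => hcov _ _ hc.symm)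
    (.inr (mem_colorClass.2 ⟨by omega, rfl⟩))
  rw [hclass, hclass, Set.ncard_coe_finset, Set.ncard_coe_finset]
  rw [Fintype.card_fin] at hfirst hlast
  omega

/-- If a path on `m` vertices colored with `n` colors covers every pair of distinct
colors on some edge, and the endpoints have different colors `a` and `b`, then each of
the two endpoint color classes has at least `⌈n/2⌉` vertices. -/
theorem stmt_7 (n m : ℕ) (hn : 2 ≤ n) (hm : 1 ≤ m) (s : ℕ → Fin n)
    (hcov : ∀ a b : Fin n, a ≠ b → ∃ i : ℕ, i + 1 < m ∧
      ((s i = a ∧ s (i + 1) = b) ∨ (s i = b ∧ s (i + 1) = a)))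
    (hend : s 0 ≠ s (m - 1)) :
    (n + 1) / 2 ≤ ({i : ℕ | i < m ∧ s i = s 0}).ncard ∧
    (n + 1) / 2 ≤ ({i : ℕ | i < m ∧ s i = s (m - 1)}).ncard :=
  stmt_7_general n m hm s hcov
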